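/- arXiv:2502.04620 — 2 statements merged into one kernel-verified Lean document; each statement's English description precedes it below -/
import Mathlib

section
/- Commutator dichotomy for Pauli strings: for any n-qubit Pauli strings p and q, either P(p) * P(q) = P(q) * P(p), in which case ⁅Complex.I • P(p), Complex.I • P(q)⁆ = 0, or P(p) * P(q) = −P(q) * P(p), in which case there exist an n-qubit Pauli string r and a sign ε ∈ {1, −1} such that ⁅Complex.I • P(p), Complex.I • P(q)⁆ = (2·ε) • (Complex.I • P(r)). -/
open Matrix

attribute [local instance 100] LieRing.ofAssociativeRing

/-- The four 2×2 Pauli matrices: identity, X, Y, Z. -/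
noncomputable def pauli : Fin 4 → Matrix (Fin 2) (Fin 2) ℂ
  | 0 => 1
  | 1 => !![0, 1; 1, 0]
  | 2 => !![0, -Complex.I; Complex.I, 0]
  | 3 => !![1, 0; 0, -1]

/-- The matrix of an `n`-qubit Pauli string `p : Fin n → Fin 4`,
the Kronecker product of the `pauli (p i)`. -/
noncomputable def PauliMat {n : ℕ} (p : Fin n → Fin 4) :
    Matrix (Fin n → Fin 2) (Fin n → Fin 2) ℂ :=
  Matrix.of fun x y => ∏ i, pauli (p i) (x i) (y i)

/-- The Hamiltonian algebra of a set of Pauli strings: the Lie ℝ-subalgebra of the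
complex matrices generated by `{I • P(p) : p ∈ S}`. -/
noncomputable def hamAlg {n : ℕ} (S : Set (Fin n → Fin 4)) :
    LieSubalgebra ℝ (Matrix (Fin n → Fin 2) (Fin n → Fin 2) ℂ) :=
  LieSubalgebra.lieSpan ℝ _ ((fun p => Complex.I • PauliMat p) '' S)

/-- The Pauli string `→A_iB_j`: letter `A` at `i`, letter `B` at `j`, `Z` strictly
between `i` and `j`, identity elsewhere. -/
def ladderString {n : ℕ} (i j : Fin n) (A B : Fin 4) : Fin n → Fin 4 :=
  fun k => if k = i then A else if k = j then B
    else if min i j < k ∧ k < max i j then 3 else 0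

/-- The Pauli string `Z_kZ_l`. -/
def zzString {n : ℕ} (k l : Fin n) : Fin n → Fin 4 :=
  fun m => if m = k ∨ m = l then 3 else 0

/-- The Pauli string `Z_k`. -/
def zString {n : ℕ} (k : Fin n) : Fin n → Fin 4 :=
  fun m => if m = k then 3 else 0

/-- A choice of letter: `X` if `c = 0`, `Y` if `c = 1`. -/
def ltr (c : Fin 2) : Fin 4 := if c = 0 then 1 else 2

/-- The opposite letter: `Y` if `c = 0`, `X` if `c = 1`. -/
def ltrBar (c : Fin 2) : Fin 4 := if c = 0 then 2 else 1

/-- Pauli strings of the Jordan–Wigner transformed hopping terms of one spin species,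
with sites embedded via `v : Fin N → Fin (2N)` and hoppings on the edges of `G`. -/
def Sspin {N : ℕ} (G : SimpleGraph (Fin N)) (v : Fin N → Fin (2 * N)) :
    Set (Fin (2 * N) → Fin 4) :=
  {p | ∃ k l : Fin N, G.Adj k l ∧
    (p = ladderString (v k) (v l) 1 1 ∨ p = ladderString (v k) (v l) 2 2)}

/-- Pauli strings of the Jordan–Wigner transformed free fermion model. -/
def Sfree {N : ℕ} (G : SimpleGraph (Fin N)) (u d : Fin N → Fin (2 * N)) :
    Set (Fin (2 * N) → Fin 4) :=
  Sspin G u ∪ Sspin G d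

/-- Pauli strings of the model with a single on-site Coulomb interaction at fermion
site `i0` (interaction term `Z_{u i0} Z_{d i0}`). -/
def Sint {N : ℕ} (G : SimpleGraph (Fin N)) (u d : Fin N → Fin (2 * N)) (i0 : Fin N) :
    Set (Fin (2 * N) → Fin 4) :=
  Sfree G u d ∪ {zzString (u i0) (d i0)}

/-!
Single-qubit Pauli matrices multiply as the Klein four-group up to a phase in `{1, ±i}`, and
swapping the factors inverts the phase. Hence `P(p) P(q) = c • P(r)` and `P(q) P(p) = c⁻¹ • P(r)`
with `c² = ±1`: if `c = ±1` the strings commute, and if `c = ±i` they anticommute and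
`⁅i P(p), i P(q)⁆ = -(P(p) P(q) - P(q) P(p)) = -2c • P(r)`.
-/

noncomputable def pauliPhase : Fin 4 → Fin 4 → ℂ :=
  ![![1, 1, 1, 1],
    ![1, 1, Complex.I, -Complex.I],
    ![1, -Complex.I, 1, Complex.I],
    ![1, Complex.I, -Complex.I, 1]]

theorem pauli_mul (a b : Fin 4) : pauli a * pauli b = pauliPhase a b • pauli (a ^^^ b) := by
  fin_cases a <;> fin_cases b <;> ext i j <;> fin_cases i <;> fin_cases j <;>
    simp [pauli, pauliPhase, Matrix.mul_apply]

theorem pauliPhase_swap (a b : Fin 4) : pauliPhase b a = (pauliPhase a b)⁻¹ := by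
  fin_cases a <;> fin_cases b <;> simp [pauliPhase]

theorem pauliPhase_sq (a b : Fin 4) : pauliPhase a b ^ 2 = 1 ∨ pauliPhase a b ^ 2 = -1 := by
  fin_cases a <;> fin_cases b <;> simp [pauliPhase]

theorem PauliMat_mul {n : ℕ} (p q : Fin n → Fin 4) :
    PauliMat p * PauliMat q =
      (∏ i, pauliPhase (p i) (q i)) • PauliMat (fun i => p i ^^^ q i) := by
  ext x y
  calc (PauliMat p * PauliMat q) x y
      = ∑ z : Fin n → Fin 2, ∏ i, pauli (p i) (x i) (z i) * pauli (q i) (z i) (y i) := by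
        simp only [Matrix.mul_apply, PauliMat, Matrix.of_apply, Finset.prod_mul_distrib]
    _ = ∏ i, (pauli (p i) * pauli (q i)) (x i) (y i) := by
        simp only [Fintype.prod_sum, Matrix.mul_apply]
    _ = _ := by
        simp [pauli_mul, PauliMat, Finset.prod_mul_distrib]

theorem Finset.prod_sq_eq_one_or_neg_one {ι R : Type*} [CommMonoid R] [HasDistribNeg R]
    (s : Finset ι) {f : ι → R} (hf : ∀ i ∈ s, f i ^ 2 = 1 ∨ f i ^ 2 = -1) :
    (∏ i ∈ s, f i) ^ 2 = 1 ∨ (∏ i ∈ s, f i) ^ 2 = -1 := by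
  rw [← Finset.prod_pow]
  refine Finset.prod_induction _ (fun x => x = 1 ∨ x = -1) ?_ (Or.inl rfl) hf
  rintro a b (rfl | rfl) (rfl | rfl) <;> simp

section

variable {m : Type*} [Fintype m] [DecidableEq m]

theorem lie_I_smul_I_smul (A B : Matrix m m ℂ) :
    ⁅Complex.I • A, Complex.I • B⁆ = -(A * B - B * A) := by
  rw [Ring.lie_def, smul_mul_smul_comm, smul_mul_smul_comm, Complex.I_mul_I, neg_one_smul,
    neg_one_smul, neg_sub_neg, neg_sub]

theorem commute_or_anticommute_of_mul_eq_smul {A B R : Matrix m m ℂ} {c : ℂ}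
    (hAB : A * B = c • R) (hBA : B * A = c⁻¹ • R) (hc : c ^ 2 = 1 ∨ c ^ 2 = -1) :
    (A * B = B * A ∧ ⁅Complex.I • A, Complex.I • B⁆ = 0) ∨
    (A * B = -(B * A) ∧ ∃ ε : ℝ, (ε = 1 ∨ ε = -1) ∧
      ⁅Complex.I • A, Complex.I • B⁆ = (2 * ε) • (Complex.I • R)) := by
  rcases hc with hc | hc
  · have hcomm : A * B = B * A := by
      rw [hAB, hBA, inv_eq_of_mul_eq_one_left (by rw [← sq, hc])]
    exact Or.inl ⟨hcomm, by rw [lie_I_smul_I_smul, hcomm, sub_self, neg_zero]⟩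
  · have hinv : c⁻¹ = -c := inv_eq_of_mul_eq_one_left (by rw [neg_mul, ← sq, hc, neg_neg])
    have hanti : A * B = -(B * A) := by rw [hAB, hBA, hinv, neg_smul, neg_neg]
    have hlie : ⁅Complex.I • A, Complex.I • B⁆ = (-2 * c) • R := by
      rw [lie_I_smul_I_smul, hAB, hBA, hinv, ← sub_smul, ← neg_smul]
      congr 1
      ring
    obtain ⟨ε, hε, rfl⟩ : ∃ ε : ℝ, (ε = 1 ∨ ε = -1) ∧ c = -ε * Complex.I := by
      rcases sq_eq_sq_iff_eq_or_eq_neg.mp (hc.trans Complex.I_sq.symm) with rfl | rfl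
      · exact ⟨-1, Or.inr rfl, by push_cast; ring⟩
      · exact ⟨1, Or.inl rfl, by push_cast; ring⟩
    refine Or.inr ⟨hanti, ε, hε, ?_⟩
    rw [hlie, ← algebraMap_smul ℂ (2 * ε), Complex.coe_algebraMap, smul_smul]
    congr 1
    push_cast
    ring

end

/-- Commutator dichotomy for Pauli strings: two Pauli strings either commute (and then
the bracket vanishes) or anticommute (and then the bracket is `±2` times `I` times
another Pauli string). -/
theorem pauliMat_commute_or_anticommute {n : ℕ} (p q : Fin n → Fin 4) :
    (PauliMat p * PauliMat q = PauliMat q * PauliMat p ∧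
      ⁅Complex.I • PauliMat p, Complex.I • PauliMat q⁆ = 0) ∨
    (PauliMat p * PauliMat q = -(PauliMat q * PauliMat p) ∧
      ∃ (r : Fin n → Fin 4) (ε : ℝ), (ε = 1 ∨ ε = -1) ∧
        ⁅Complex.I • PauliMat p, Complex.I • PauliMat q⁆ =
          (2 * ε) • (Complex.I • PauliMat r)) := by
  have hqp : PauliMat q * PauliMat p =
      (∏ i, pauliPhase (p i) (q i))⁻¹ • PauliMat (fun i => p i ^^^ q i) := by
    simp only [PauliMat_mul q p, pauliPhase_swap (p _) (q _), Finset.prod_inv_distrib,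
      Fin.xor_comm]
  rcases commute_or_anticommute_of_mul_eq_smul (PauliMat_mul p q) hqp
      (Finset.prod_sq_eq_one_or_neg_one _ fun i _ => pauliPhase_sq (p i) (q i)) with
    hcomm | ⟨hanti, ε, hε, hlie⟩
  · exact Or.inl hcomm
  · exact Or.inr ⟨hanti, _, ε, hε, hlie⟩
end

section
/- Single-spin free-fermion bound: let N ≥ 1, let G be a connected simple graph on Fin N, and let u : Fin N → Fin (2N) be injective. Let S_u be the set of 2N-qubit Pauli strings S_u = {→X_{u(k)}X_{u(l)}, →Y_{u(k)}Y_{u(l)} : (k,l) an edge of G}. Then dim g(S_u) ≤ N(2N−1). -/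
open Matrix

attribute [local instance 100] LieRing.ofAssociativeRing

/-!
Under the Jordan–Wigner transform every generator of `g(S_u)` is, up to sign, a product
`γ γ'` of two of the `2N` Majorana strings `γ_{k,c} = Z ⋯ Z σ_c` ending at qubit `u k`. These
square to `1` and pairwise anticommute, and `[[a, b], c] = a{b, c} - {a, c}b - b{a, c} + {b, c}a`
involves only anticommutators, which are scalars. Hence the real span of the commutators
`[γ, γ'] = 2 γ γ'` (a copy of `so(2N)`) is a Lie subalgebra containing `g(S_u)`, and it is
spanned by `(2N choose 2) = N(2N - 1)` elements.
-/

section PiKronecker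

variable {ι κ R : Type*} [Fintype ι] [CommRing R]

def piKronecker (A : ι → Matrix κ κ R) : Matrix (ι → κ) (ι → κ) R :=
  Matrix.of fun x y => ∏ i, A i (x i) (y i)

theorem piKronecker_mul [DecidableEq ι] [Fintype κ] (A B : ι → Matrix κ κ R) :
    piKronecker A * piKronecker B = piKronecker (A * B) := by
  ext x y
  simp only [piKronecker, Matrix.mul_apply, Matrix.of_apply, Pi.mul_apply,
    Finset.prod_univ_sum, Fintype.piFinset_univ, Finset.prod_mul_distrib]

theorem piKronecker_one [DecidableEq κ] : piKronecker (1 : ι → Matrix κ κ R) = 1 := by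
  ext x y
  simp only [piKronecker, Matrix.of_apply, Pi.one_apply, Matrix.one_apply, Finset.prod_boole,
    Finset.mem_univ, true_implies, funext_iff]

theorem piKronecker_smul (r : ι → R) (A : ι → Matrix κ κ R) :
    piKronecker (fun i => r i • A i) = (∏ i, r i) • piKronecker A := by
  ext x y
  simp [piKronecker, Finset.prod_mul_distrib]

theorem piKronecker_mul_eq_neg_of_anticommute_at [DecidableEq ι] [Fintype κ]
    {A B : ι → Matrix κ κ R} (j : ι)
    (hcomm : ∀ i ≠ j, A i * B i = B i * A i) (hanti : A j * B j = -(B j * A j)) :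
    piKronecker A * piKronecker B = -(piKronecker B * piKronecker A) := by
  have hAB : A * B = fun i => (if i = j then -1 else 1 : R) • (B * A) i := by
    funext i
    by_cases hi : i = j
    · subst hi; simp [hanti]
    · simp [hi, hcomm i hi]
  rw [piKronecker_mul, piKronecker_mul, hAB, piKronecker_smul, Finset.prod_ite_eq']
  simp

end PiKronecker

theorem PauliMat_eq_piKronecker {n : ℕ} (p : Fin n → Fin 4) :
    PauliMat p = piKronecker fun i => pauli (p i) := rfl

@[simp]
theorem pauli_zero : pauli 0 = 1 := rfl

theorem pauli_mul_self (a : Fin 4) : pauli a * pauli a = 1 := by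
  fin_cases a <;> ext i j <;> fin_cases i <;> fin_cases j <;> simp [pauli, Matrix.mul_apply]

theorem pauli_mul_comm_of_eq_or_eq_zero {a b : Fin 4} (h : a = b ∨ a = 0 ∨ b = 0) :
    pauli a * pauli b = pauli b * pauli a := by
  rcases h with rfl | rfl | rfl <;> simp

theorem pauli_mul_anticomm {a b : Fin 4} (hab : a ≠ b) (ha : a ≠ 0) (hb : b ≠ 0) :
    pauli a * pauli b = -(pauli b * pauli a) := by
  fin_cases a <;> fin_cases b <;> simp at hab ha hb <;>
    ext i j <;> fin_cases i <;> fin_cases j <;> simp [pauli, Matrix.mul_apply]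

theorem pauli_two_mul_pauli_three : pauli 2 * pauli 3 = Complex.I • pauli 1 := by
  ext i j; fin_cases i <;> fin_cases j <;> simp [pauli, Matrix.mul_apply]

theorem pauli_one_mul_pauli_three : pauli 1 * pauli 3 = -Complex.I • pauli 2 := by
  ext i j; fin_cases i <;> fin_cases j <;> simp [pauli, Matrix.mul_apply]

theorem PauliMat_mul_self {n : ℕ} (p : Fin n → Fin 4) : PauliMat p * PauliMat p = 1 := by
  rw [PauliMat_eq_piKronecker, piKronecker_mul]
  exact (congrArg piKronecker (funext fun i => pauli_mul_self (p i))).trans piKronecker_one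

theorem PauliMat_mul_anticomm {n : ℕ} {p q : Fin n → Fin 4} (j : Fin n)
    (hcomm : ∀ i ≠ j, p i = q i ∨ p i = 0 ∨ q i = 0) (hj : p j ≠ q j) (hp : p j ≠ 0)
    (hq : q j ≠ 0) :
    PauliMat p * PauliMat q = -(PauliMat q * PauliMat p) :=
  piKronecker_mul_eq_neg_of_anticommute_at j
    (fun i hi => pauli_mul_comm_of_eq_or_eq_zero (hcomm i hi)) (pauli_mul_anticomm hj hp hq)

theorem ltr_ne_zero (c : Fin 2) : ltr c ≠ 0 := by fin_cases c <;> decide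
theorem ltr_ne_three (c : Fin 2) : ltr c ≠ 3 := by fin_cases c <;> decide
theorem ltr_injective : Function.Injective ltr := by decide

def jwMajorana {n : ℕ} (a : Fin n) (c : Fin 2) : Fin n → Fin 4 :=
  fun m => if m < a then 3 else if m = a then ltr c else 0

theorem PauliMat_jwMajorana_anticomm {n : ℕ} {a b : Fin n} {c d : Fin 2}
    (h : (a, c) ≠ (b, d)) :
    PauliMat (jwMajorana a c) * PauliMat (jwMajorana b d) =
      -(PauliMat (jwMajorana b d) * PauliMat (jwMajorana a c)) := by
  wlog hab : a ≤ b generalizing a b c d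
  · rw [this (Ne.symm h) (le_of_not_ge hab), neg_neg]
  refine PauliMat_mul_anticomm a (fun i hi => ?_) ?_ ?_ ?_
  · rcases lt_or_gt_of_ne hi with hia | hia
    · simp [jwMajorana, hia, hia.trans_le hab]
    · simp [jwMajorana, hia.ne', not_lt.mpr hia.le]
  · rcases hab.lt_or_eq with hab | rfl
    · simp [jwMajorana, hab, ltr_ne_three]
    · simpa [jwMajorana, ltr_injective.eq_iff] using h
  · simp [jwMajorana, ltr_ne_zero]
  · rcases hab.lt_or_eq with hab | rfl
    · simp [jwMajorana, hab]
    · simp [jwMajorana, ltr_ne_zero]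

theorem PauliMat_jwMajorana_mul_of_lt {n : ℕ} {a b : Fin n} (hab : a < b) {c d : Fin 2}
    {A : Fin 4} {ζ : ℂ} (hζ : pauli (ltr c) * pauli 3 = ζ • pauli A) :
    PauliMat (jwMajorana a c) * PauliMat (jwMajorana b d) =
      ζ • PauliMat (ladderString a b A (ltr d)) := by
  have hsite : (fun i => pauli (jwMajorana a c i)) * (fun i => pauli (jwMajorana b d i)) =
      fun i => (if i = a then ζ else 1) • pauli (ladderString a b A (ltr d) i) := by
    funext i
    rcases lt_trichotomy i a with hia | rfl | hia
    · simp [jwMajorana, ladderString, hia, hia.trans hab, hia.ne, (hia.trans hab).ne,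
        pauli_mul_self, min_eq_left hab.le, not_lt.mpr hia.le]
    · simp [jwMajorana, ladderString, hab, hζ]
    · rcases lt_trichotomy i b with hib | rfl | hib
      · simp [jwMajorana, ladderString, hia, hib, hia.ne', hib.ne, not_lt.mpr hia.le,
          min_eq_left hab.le, max_eq_right hab.le]
      · simp [jwMajorana, ladderString, hab.ne', not_lt.mpr hab.le]
      · simp [jwMajorana, ladderString, hia, hia.ne', hib.ne', not_lt.mpr hia.le,
          not_lt.mpr hib.le, min_eq_left hab.le, max_eq_right hab.le]
  rw [PauliMat_eq_piKronecker, PauliMat_eq_piKronecker, PauliMat_eq_piKronecker,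
    piKronecker_mul, hsite, piKronecker_smul, Finset.prod_ite_eq']
  simp

theorem ladderString_comm {n : ℕ} (i j : Fin n) (A : Fin 4) :
    ladderString i j A A = ladderString j i A A := by
  funext m
  by_cases hi : m = i <;> by_cases hj : m = j <;> simp [ladderString, hi, hj, min_comm, max_comm]

section BracketSpan

variable {L ι : Type*} [LieRing L]

def bracketSpan (K : Type*) [CommRing K] [LieAlgebra K L] (γ : ι → L) : Submodule K L :=
  Submodule.span K (Set.range fun p : ι × ι => ⁅γ p.1, γ p.2⁆)

theorem finrank_bracketSpan_le {K : Type*} [Field K] [LieAlgebra K L] [Fintype ι] (γ : ι → L) :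
    Module.finrank K (bracketSpan K γ) ≤ (Fintype.card ι).choose 2 := by
  classical
  let _ : LinearOrder ι := LinearOrder.lift' _ (Fintype.equivFin ι).injective
  let ordered : {p : ι × ι // p.1 < p.2} → L := fun p => ⁅γ p.1.1, γ p.1.2⁆
  have hle : bracketSpan K γ ≤ Submodule.span K (Set.range ordered) := by
    refine Submodule.span_le.mpr ?_
    rintro _ ⟨⟨i, j⟩, rfl⟩
    rcases lt_trichotomy i j with hij | rfl | hij
    · exact Submodule.subset_span ⟨⟨(i, j), hij⟩, rfl⟩
    · simp
    · show ⁅γ i, γ j⁆ ∈ _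
      rw [← lie_skew]
      exact neg_mem (Submodule.subset_span ⟨⟨(j, i), hij⟩, rfl⟩)
  have := Module.Finite.span_of_finite K (Set.finite_range ordered)
  calc Module.finrank K (bracketSpan K γ)
      ≤ Module.finrank K (Submodule.span K (Set.range ordered)) := Submodule.finrank_mono hle
    _ ≤ Fintype.card {p : ι × ι // p.1 < p.2} := finrank_range_le_card ordered
    _ = (Fintype.card ι).choose 2 := by
      rw [Fintype.card_subtype, Fintype.card_product_filter_lt]

theorem lie_mem_bracketSpan_of_mem_span_range {K : Type*} [CommRing K] [LieAlgebra K L]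
    {γ : ι → L} {v : L} (hv : v ∈ Submodule.span K (Set.range γ)) (k : ι) :
    ⁅v, γ k⁆ ∈ bracketSpan K γ := by
  induction hv using Submodule.span_induction with
  | mem _ hv =>
    obtain ⟨i, rfl⟩ := hv
    exact Submodule.subset_span ⟨(i, k), rfl⟩
  | zero => simp
  | add x y _ _ hx hy => rw [add_lie]; exact add_mem hx hy
  | smul r x _ hx => rw [smul_lie]; exact Submodule.smul_mem _ r hx

instance [Finite ι] {K : Type*} [CommRing K] [LieAlgebra K L] (γ : ι → L) :
    Module.Finite K (bracketSpan K γ) :=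
  Module.Finite.span_of_finite K (Set.finite_range _)

end BracketSpan

def HasScalarAnticommutators (K : Type*) {A ι : Type*} [CommRing K] [Ring A] [Algebra K A]
    (γ : ι → A) : Prop :=
  ∀ i j, ∃ r : K, γ i * γ j + γ j * γ i = algebraMap K A r

section ScalarAnticommutators

variable {K A ι : Type*} [CommRing K] [Ring A] [Algebra K A] {γ : ι → A}

theorem lie_lie_eq_of_anticommutator_eq_algebraMap {a b c : A} {r s : K}
    (hbc : b * c + c * b = algebraMap K A r) (hac : a * c + c * a = algebraMap K A s) :
    ⁅⁅a, b⁆, c⁆ = (2 * r) • a - (2 * s) • b := by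
  have hexpand : ⁅⁅a, b⁆, c⁆ =
      a * (b * c + c * b) - (a * c + c * a) * b - b * (a * c + c * a) + (b * c + c * b) * a := by
    simp only [Ring.lie_def]; noncomm_ring
  rw [hexpand, hbc, hac, ← Algebra.commutes r a, ← Algebra.commutes s b]
  simp only [← Algebra.smul_def]
  module

theorem lie_mem_span_range_of_mem_bracketSpan (hγ : HasScalarAnticommutators K γ) {x : A}
    (hx : x ∈ bracketSpan K γ) (k : ι) : ⁅x, γ k⁆ ∈ Submodule.span K (Set.range γ) := by
  induction hx using Submodule.span_induction with
  | mem _ hx =>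
    obtain ⟨⟨i, j⟩, rfl⟩ := hx
    obtain ⟨r, hr⟩ := hγ j k
    obtain ⟨s, hs⟩ := hγ i k
    rw [lie_lie_eq_of_anticommutator_eq_algebraMap hr hs]
    exact sub_mem (Submodule.smul_mem _ _ (Submodule.subset_span ⟨i, rfl⟩))
      (Submodule.smul_mem _ _ (Submodule.subset_span ⟨j, rfl⟩))
  | zero => simp
  | add x y _ _ hx hy => rw [add_lie]; exact add_mem hx hy
  | smul r x _ hx => rw [smul_lie]; exact Submodule.smul_mem _ r hx

theorem lie_mem_bracketSpan (hγ : HasScalarAnticommutators K γ) {x y : A}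
    (hx : x ∈ bracketSpan K γ) (hy : y ∈ bracketSpan K γ) : ⁅x, y⁆ ∈ bracketSpan K γ := by
  induction hy using Submodule.span_induction with
  | mem _ hy =>
    obtain ⟨⟨k, l⟩, rfl⟩ := hy
    have hk := lie_mem_bracketSpan_of_mem_span_range
      (lie_mem_span_range_of_mem_bracketSpan hγ hx k) l
    have hl := lie_mem_bracketSpan_of_mem_span_range
      (lie_mem_span_range_of_mem_bracketSpan hγ hx l) k
    show ⁅x, ⁅γ k, γ l⁆⁆ ∈ _
    rw [leibniz_lie, ← lie_skew (γ k)]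
    exact add_mem hk (neg_mem hl)
  | zero => simp
  | add y z _ _ hy hz => rw [lie_add]; exact add_mem hy hz
  | smul r y _ hy => rw [lie_smul]; exact Submodule.smul_mem _ r hy

theorem lieSpan_le_bracketSpan (hγ : HasScalarAnticommutators K γ) {s : Set A}
    (hs : s ⊆ bracketSpan K γ) : (LieSubalgebra.lieSpan K A s).toSubmodule ≤ bracketSpan K γ :=
  (LieSubalgebra.lieSpan_le
    (K := { bracketSpan K γ with lie_mem' := lie_mem_bracketSpan hγ })).mpr hs

theorem mul_mem_bracketSpan_of_anticomm [Invertible (2 : K)] {i j : ι}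
    (h : γ i * γ j = -(γ j * γ i)) : γ i * γ j ∈ bracketSpan K γ := by
  have hlie : ⁅γ i, γ j⁆ = (2 : K) • (γ i * γ j) := by
    rw [Ring.lie_def, ← neg_neg (γ j * γ i), ← h, sub_neg_eq_add, two_smul]
  have hmem := Submodule.smul_mem (bracketSpan K γ) (⅟2 : K)
    (Submodule.subset_span ⟨(i, j), rfl⟩ : ⁅γ i, γ j⁆ ∈ bracketSpan K γ)
  rwa [hlie, smul_smul, invOf_mul_self, one_smul] at hmem

end ScalarAnticommutators

section JordanWigner

variable {N n : ℕ}

noncomputable def majoranaFamily (u : Fin N → Fin n) (kc : Fin N × Fin 2) :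
    Matrix (Fin n → Fin 2) (Fin n → Fin 2) ℂ :=
  PauliMat (jwMajorana (u kc.1) kc.2)

theorem majoranaFamily_anticomm {u : Fin N → Fin n} (hu : Function.Injective u)
    {i j : Fin N × Fin 2} (h : i ≠ j) :
    majoranaFamily u i * majoranaFamily u j = -(majoranaFamily u j * majoranaFamily u i) :=
  PauliMat_jwMajorana_anticomm fun hij =>
    h (Prod.ext (hu (Prod.ext_iff.mp hij).1) (Prod.ext_iff.mp hij).2)

theorem hasScalarAnticommutators_majoranaFamily {u : Fin N → Fin n} (hu : Function.Injective u) :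
    HasScalarAnticommutators ℝ (majoranaFamily u) := by
  intro i j
  by_cases h : i = j
  · subst h
    refine ⟨2, ?_⟩
    rw [majoranaFamily, PauliMat_mul_self, map_ofNat]
    norm_num
  · exact ⟨0, by rw [majoranaFamily_anticomm hu h, neg_add_cancel, map_zero]⟩

theorem I_smul_PauliMat_ladderString_mem_bracketSpan_of_lt {u : Fin N → Fin n}
    (hu : Function.Injective u) {k l : Fin N} (hkl : u k < u l) {A : Fin 4} (hA : A = 1 ∨ A = 2) :
    Complex.I • PauliMat (ladderString (u k) (u l) A A) ∈ bracketSpan ℝ (majoranaFamily u) := by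
  have hne : ∀ c d : Fin 2, (k, c) ≠ (l, d) := fun c d h =>
    hkl.ne (congrArg u (congrArg Prod.fst h))
  rcases hA with rfl | rfl
  · have hXX : majoranaFamily u (k, 1) * majoranaFamily u (l, 0) =
        Complex.I • PauliMat (ladderString (u k) (u l) 1 1) :=
      PauliMat_jwMajorana_mul_of_lt hkl pauli_two_mul_pauli_three
    exact hXX ▸ mul_mem_bracketSpan_of_anticomm (majoranaFamily_anticomm hu (hne 1 0))
  · have hYY : majoranaFamily u (k, 0) * majoranaFamily u (l, 1) =
        -Complex.I • PauliMat (ladderString (u k) (u l) 2 2) :=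
      PauliMat_jwMajorana_mul_of_lt hkl pauli_one_mul_pauli_three
    rw [← neg_neg (Complex.I • _), ← neg_smul, ← hYY]
    exact neg_mem (mul_mem_bracketSpan_of_anticomm (majoranaFamily_anticomm hu (hne 0 1)))

theorem I_smul_PauliMat_ladderString_mem_bracketSpan {u : Fin N → Fin n}
    (hu : Function.Injective u) {k l : Fin N} (hkl : k ≠ l) {A : Fin 4} (hA : A = 1 ∨ A = 2) :
    Complex.I • PauliMat (ladderString (u k) (u l) A A) ∈ bracketSpan ℝ (majoranaFamily u) := by
  rcases (hu.ne hkl).lt_or_gt with hlt | hgt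
  · exact I_smul_PauliMat_ladderString_mem_bracketSpan_of_lt hu hlt hA
  · rw [ladderString_comm]
    exact I_smul_PauliMat_ladderString_mem_bracketSpan_of_lt hu hgt hA

theorem image_Sspin_subset_bracketSpan {G : SimpleGraph (Fin N)} {u : Fin N → Fin (2 * N)}
    (hu : Function.Injective u) :
    (fun p => Complex.I • PauliMat p) '' Sspin G u ⊆ bracketSpan ℝ (majoranaFamily u) := by
  rintro _ ⟨_, ⟨k, l, hadj, rfl | rfl⟩, rfl⟩
  · exact I_smul_PauliMat_ladderString_mem_bracketSpan hu hadj.ne (by simp)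
  · exact I_smul_PauliMat_ladderString_mem_bracketSpan hu hadj.ne (by simp)

end JordanWigner

theorem finrank_hamAlg_single_spin_le_general (N : ℕ) (G : SimpleGraph (Fin N))
    (u : Fin N → Fin (2 * N)) (hu : Function.Injective u) :
    Module.finrank ℝ (hamAlg (Sspin G u)) ≤ N * (2 * N - 1) := by
  have hle : (hamAlg (Sspin G u)).toSubmodule ≤ bracketSpan ℝ (majoranaFamily u) :=
    lieSpan_le_bracketSpan (hasScalarAnticommutators_majoranaFamily hu)
      (image_Sspin_subset_bracketSpan hu)
  calc Module.finrank ℝ (hamAlg (Sspin G u))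
      ≤ Module.finrank ℝ (bracketSpan ℝ (majoranaFamily u)) := Submodule.finrank_mono hle
    _ ≤ (Fintype.card (Fin N × Fin 2)).choose 2 := finrank_bracketSpan_le _
    _ = N * (2 * N - 1) := by
      rw [Fintype.card_prod, Fintype.card_fin, Fintype.card_fin, Nat.choose_two_right,
        mul_comm N 2, mul_assoc, Nat.mul_div_cancel_left _ two_pos]

/-- Single-spin free-fermion bound: the Hamiltonian algebra of one spin species of the
Jordan–Wigner transformed free fermion model has dimension at most `N(2N − 1)`. -/
theorem finrank_hamAlg_single_spin_le (N : ℕ) (hN : 1 ≤ N)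
    (G : SimpleGraph (Fin N)) (hG : G.Connected)
    (u : Fin N → Fin (2 * N)) (hu : Function.Injective u) :
    Module.finrank ℝ (hamAlg (Sspin G u)) ≤ N * (2 * N - 1) :=
  finrank_hamAlg_single_spin_le_general N G u hu
end
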